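/- Let G and G̃ be bipartite graphs without isolated vertices and let s, t ≥ 1 be natural numbers. Then there exists a bipartite graph without isolated vertices having exactly 2^{st}·ι_m(G) + ((2^{st} − 1)/(2^t − 1))·ι_m(G̃) maximal independent sets and at most ν(G) + ν(G̃) + 2s(t+1) + 3 vertices. -/

import Mathlib

/-!
Properly 2-colour `G` by `c` and `G̃` by `c̃`. The graph `crossGraph` is `G ⊔ G̃` with `a ∈ G`
joined to `b ∈ G̃` iff their colours differ, together with levels `i < s`, each carrying `t`
pendant edges `x i j — y i j` and two vertices `u i`, `v i`: `v i` is joined to `u i'` and to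
`x i' j` for `i ≤ i'` and to the `c`-side of `G`, and the top level `u ⊤`, `x ⊤ j` is joined to the
non-`c̃`-side of `G̃`.

For `i ≤ i'` the neighbourhood of `v i'` lies in that of `v i`, so the `v i` in a maximal
independent set `S` form an up-set. If `S` contains no `v i`, then it contains every `u i`, meets
`G` in an arbitrary maximal independent set, its trace on `G̃` is forced, and the pendant edges are
free: `2^{st} ι_m(G)` sets. If `v i ∈ S` exactly for `k ≤ i`, then `S` meets `G̃` in an arbitrary
maximal independent set, its trace on `G` is forced, and only the pendant edges below level `k`
are free: `2^{kt} ι_m(G̃)` sets. Summing the geometric series over `k` gives the count.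
-/

/-- `s` is an independent set of vertices in `G`. -/
def IsIndep {V : Type*} (G : SimpleGraph V) (s : Finset V) : Prop :=
  ∀ u ∈ s, ∀ v ∈ s, ¬ G.Adj u v

/-- `s` is a maximal independent set in `G`. -/
def IsMaxIndep {V : Type*} (G : SimpleGraph V) (s : Finset V) : Prop :=
  IsIndep G s ∧ ∀ t : Finset V, IsIndep G t → s ⊆ t → s = t

/-- `ι G`: the number of independent sets of `G` (including `∅`). -/
noncomputable def iota {V : Type*} [Fintype V] (G : SimpleGraph V) : ℕ :=
  Nat.card {s : Finset V // IsIndep G s}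

/-- `ι_m G`: the number of maximal independent sets of `G`. -/
noncomputable def iotaM {V : Type*} [Fintype V] (G : SimpleGraph V) : ℕ :=
  Nat.card {s : Finset V // IsMaxIndep G s}

/-- `(L, R)` is a bipartition of `G`. -/
def IsBipartition {V : Type*} (G : SimpleGraph V) (L R : Finset V) : Prop :=
  Disjoint L R ∧ (∀ v : V, v ∈ L ∨ v ∈ R) ∧
    ∀ u v : V, G.Adj u v → (u ∈ L ∧ v ∈ R) ∨ (u ∈ R ∧ v ∈ L)

/-- `G` is bipartite. -/
def IsBipartite {V : Type*} (G : SimpleGraph V) : Prop :=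
  ∃ L R : Finset V, IsBipartition G L R

/-- `G` has no isolated vertices. -/
def NoIsolated {V : Type*} (G : SimpleGraph V) : Prop :=
  ∀ v : V, ∃ u : V, G.Adj v u


section MaxIndep

variable {V : Type*} {G : SimpleGraph V} {S : Finset V} {z w : V}

theorem isMaxIndep_iff :
    IsMaxIndep G S ↔ IsIndep G S ∧ ∀ z ∉ S, ∃ w ∈ S, G.Adj z w := by
  classical
  refine ⟨fun hS => ⟨hS.1, fun z hz => ?_⟩,
    fun ⟨hind, hdom⟩ => ⟨hind, fun T hT hST => ?_⟩⟩
  · by_contra! h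
    have hins : IsIndep G (insert z S) := by
      simp only [IsIndep, Finset.mem_insert, forall_eq_or_imp, G.irrefl, not_false_eq_true,
        true_and]
      exact ⟨fun w hw => h w hw, fun u hu => ⟨fun hadj => h u hu hadj.symm, hS.1 u hu⟩⟩
    exact hz (hS.2 _ hins (Finset.subset_insert z S) ▸ Finset.mem_insert_self z S)
  · refine le_antisymm hST fun z hzT => ?_
    by_contra hz
    obtain ⟨w, hwS, hadj⟩ := hdom z hz
    exact hT z hzT w (hST hwS) hadj

namespace IsMaxIndep

theorem notMem_of_adj (hS : IsMaxIndep G S) (hz : z ∈ S) (h : G.Adj z w) : w ∉ S :=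
  fun hw => hS.1 z hz w hw h

theorem exists_adj_mem (hS : IsMaxIndep G S) (hz : z ∉ S) : ∃ w ∈ S, G.Adj z w :=
  (isMaxIndep_iff.1 hS).2 z hz

theorem mem_of_forall_adj (hS : IsMaxIndep G S) (h : ∀ w, G.Adj z w → w ∉ S) : z ∈ S := by
  by_contra hz
  obtain ⟨w, hwS, hadj⟩ := hS.exists_adj_mem hz
  exact h w hadj hwS

theorem mem_of_adj_imp (hS : IsMaxIndep G S) (hz : z ∈ S) (h : ∀ u, G.Adj w u → G.Adj z u) :
    w ∈ S :=
  hS.mem_of_forall_adj fun u hu => hS.notMem_of_adj hz (h u hu)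

end IsMaxIndep

variable {W : Type*} {H : SimpleGraph W}

theorem isMaxIndep_map_iff (e : G ≃g H) :
    IsMaxIndep H (S.map e.toEquiv.toEmbedding) ↔ IsMaxIndep G S := by
  simp [isMaxIndep_iff, IsIndep, e.symm.surjective.forall, e.symm.surjective.exists,
    e.symm.map_adj_iff]
  rfl

theorem iotaM_congr [Fintype V] [Fintype W] (e : G ≃g H) : iotaM G = iotaM H :=
  Nat.card_congr <| (e.toEquiv.finsetCongr.subtypeEquiv fun _ => (isMaxIndep_map_iff e).symm)

def IsTwoColoring (G : SimpleGraph V) (c : V → Prop) : Prop :=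
  ∀ u v, G.Adj u v → (c u ↔ ¬ c v)

theorem isBipartite_iff [Fintype V] : IsBipartite G ↔ ∃ c, IsTwoColoring G c := by
  classical
  constructor
  · rintro ⟨L, R, hLR, -, hadj⟩
    refine ⟨(· ∈ L), fun u v huv => ?_⟩
    rcases hadj u v huv with ⟨hu, hv⟩ | ⟨hu, hv⟩
    · simp [hu, Finset.disjoint_right.1 hLR hv]
    · simp [hv, Finset.disjoint_right.1 hLR hu]
  · rintro ⟨c, hc⟩
    refine ⟨Finset.univ.filter c, Finset.univ.filter (¬ c ·),
      Finset.disjoint_filter_filter_not _ _ _, fun v => by simpa using em (c v),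
      fun u v huv => ?_⟩
    have := hc u v huv
    simp only [Finset.mem_filter, Finset.mem_univ, true_and]
    tauto

theorem IsBipartite.of_iso [Fintype V] [Fintype W] (e : G ≃g H) (h : IsBipartite G) :
    IsBipartite H := by
  obtain ⟨c, hc⟩ := isBipartite_iff.1 h
  exact isBipartite_iff.2 ⟨c ∘ e.symm, fun u v huv => hc _ _ (e.symm.map_adj_iff.2 huv)⟩

theorem NoIsolated.of_iso (e : G ≃g H) (h : NoIsolated G) : NoIsolated H := by
  intro w
  obtain ⟨u, hu⟩ := h (e.symm w)
  exact ⟨e u, by simpa using e.map_adj_iff.2 hu⟩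

@[simp] theorem SimpleGraph.adj_or_adj_swap {V : Type*} {G : SimpleGraph V} {a b : V} :
    G.Adj a b ∨ G.Adj b a ↔ G.Adj a b :=
  or_iff_left_of_imp fun h => h.symm

end MaxIndep

namespace CrossJoin

inductive Vert (α β : Type*) (s t : ℕ)
  | ofG : α → Vert α β s t
  | ofGt : β → Vert α β s t
  | x : Fin s → Fin t → Vert α β s t
  | y : Fin s → Fin t → Vert α β s t
  | u : Fin s → Vert α β s t
  | v : Fin s → Vert α β s t

open Vert

variable {α β : Type*} {s t : ℕ}

def equivSum :
    Vert α β s t ≃ α ⊕ β ⊕ (Fin s × Fin t) ⊕ (Fin s × Fin t) ⊕ Fin s ⊕ Fin s where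
  toFun
    | ofG a => .inl a
    | ofGt b => .inr (.inl b)
    | x i j => .inr (.inr (.inl (i, j)))
    | y i j => .inr (.inr (.inr (.inl (i, j))))
    | u i => .inr (.inr (.inr (.inr (.inl i))))
    | v i => .inr (.inr (.inr (.inr (.inr i))))
  invFun
    | .inl a => ofG a
    | .inr (.inl b) => ofGt b
    | .inr (.inr (.inl (i, j))) => x i j
    | .inr (.inr (.inr (.inl (i, j)))) => y i j
    | .inr (.inr (.inr (.inr (.inl i)))) => u i
    | .inr (.inr (.inr (.inr (.inr i)))) => v i
  left_inv z := by cases z <;> rfl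
  right_inv := by rintro (_ | _ | ⟨_, _⟩ | ⟨_, _⟩ | _ | _) <;> rfl

noncomputable instance [Fintype α] [Fintype β] : Fintype (Vert α β s t) :=
  Fintype.ofEquiv _ equivSum.symm

theorem card_vert [Fintype α] [Fintype β] :
    Fintype.card (Vert α β s t) = Fintype.card α + Fintype.card β + 2 * s * (t + 1) := by
  simp only [Fintype.card_congr equivSum, Fintype.card_sum, Fintype.card_prod, Fintype.card_fin]
  ring

noncomputable def gPart (S : Finset (Vert α β s t)) : Finset α :=
  S.preimage ofG fun _ _ _ _ => ofG.inj

noncomputable def gtPart (S : Finset (Vert α β s t)) : Finset β :=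
  S.preimage ofGt fun _ _ _ _ => ofGt.inj

noncomputable def xPart (S : Finset (Vert α β s t)) : Finset (Fin s × Fin t) :=
  S.preimage (fun p => x p.1 p.2) fun _ _ _ _ h => by simpa [Prod.ext_iff] using h

@[simp] theorem mem_gPart {S : Finset (Vert α β s t)} {a : α} : a ∈ gPart S ↔ ofG a ∈ S :=
  Finset.mem_preimage

@[simp] theorem mem_gtPart {S : Finset (Vert α β s t)} {b : β} :
    b ∈ gtPart S ↔ ofGt b ∈ S :=
  Finset.mem_preimage

@[simp] theorem mem_xPart {S : Finset (Vert α β s t)} {i : Fin s} {j : Fin t} :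
    (i, j) ∈ xPart S ↔ x i j ∈ S :=
  Finset.mem_preimage

section Sets

variable (c : α → Prop) (ct : β → Prop)

/- `setG M X` and `setGt N k X` are the two kinds of maximal independent sets of `crossGraph`:
those containing no `v i`, and those containing exactly the `v i` with `k ≤ i`. -/
def memSetG (M : Finset α) (X : Finset (Fin s × Fin t)) : Vert α β s t → Prop
  | ofG a => a ∈ M
  | ofGt b => ct b ∧ ∀ a ∈ M, c a
  | x i j => (i, j) ∈ X
  | y i j => (i, j) ∉ X
  | u _ => True
  | v _ => False

def memSetGt (N : Finset β) (k : Fin s) (X : Finset (Fin s × Fin t)) : Vert α β s t → Prop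
  | ofG a => ¬ c a ∧ ∀ b ∈ N, ¬ ct b
  | ofGt b => b ∈ N
  | x i j => (i, j) ∈ X
  | y i j => (i, j) ∉ X
  | u i => i < k
  | v i => k ≤ i

variable [Fintype α] [Fintype β]

open Classical in
noncomputable def setG (M : Finset α) (X : Finset (Fin s × Fin t)) : Finset (Vert α β s t) :=
  Finset.univ.filter (memSetG c ct M X)

open Classical in
noncomputable def setGt (N : Finset β) (k : Fin s) (X : Finset (Fin s × Fin t)) :
    Finset (Vert α β s t) :=
  Finset.univ.filter (memSetGt c ct N k X)

@[simp] theorem mem_setG {M X} {z : Vert α β s t} :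
    z ∈ setG c ct M X ↔ memSetG c ct M X z := by
  simp [setG]

@[simp] theorem mem_setGt {N k X} {z : Vert α β s t} :
    z ∈ setGt c ct N k X ↔ memSetGt c ct N k X z := by
  simp [setGt]

@[simp] theorem gPart_setG (M : Finset α) (X : Finset (Fin s × Fin t)) :
    gPart (setG c ct M X) = M := by
  ext; simp [memSetG]

@[simp] theorem xPart_setG (M : Finset α) (X : Finset (Fin s × Fin t)) :
    xPart (setG c ct M X) = X := by
  ext ⟨i, j⟩; simp [memSetG]

@[simp] theorem gtPart_setGt (N : Finset β) (k : Fin s) (X : Finset (Fin s × Fin t)) :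
    gtPart (setGt c ct N k X) = N := by
  ext; simp [memSetGt]

@[simp] theorem xPart_setGt (N : Finset β) (k : Fin s) (X : Finset (Fin s × Fin t)) :
    xPart (setGt c ct N k X) = X := by
  ext ⟨i, j⟩; simp [memSetGt]

end Sets

variable (G : SimpleGraph α) (Gt : SimpleGraph β) (c : α → Prop) (ct : β → Prop) [NeZero s]

def edgeRel : Vert α β s t → Vert α β s t → Prop
  | ofG a, ofG a' => G.Adj a a'
  | ofGt b, ofGt b' => Gt.Adj b b'
  | ofG a, ofGt b => ¬ (c a ↔ ct b)
  | x i j, y i' j' => i = i' ∧ j = j'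
  | u i, v i' => i' ≤ i
  | v i, x i' _ => i ≤ i'
  | v _, ofG a => c a
  | u i, ofGt b => i = ⊤ ∧ ¬ ct b
  | x i _, ofGt b => i = ⊤ ∧ ¬ ct b
  | _, _ => False

def crossGraph : SimpleGraph (Vert α β s t) where
  Adj z w := edgeRel G Gt c ct z w ∨ edgeRel G Gt c ct w z
  symm := ⟨fun _ _ => Or.symm⟩
  loopless := ⟨fun z => by cases z <;> simp [edgeRel]⟩

variable {G Gt c ct}

@[simp] theorem crossGraph_adj {z w : Vert α β s t} :
    (crossGraph G Gt c ct).Adj z w ↔ edgeRel G Gt c ct z w ∨ edgeRel G Gt c ct w z := Iff.rfl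

theorem isMaxIndep_setG [Fintype α] [Fintype β] (hct : IsTwoColoring Gt ct) {M : Finset α}
    (hM : IsMaxIndep G M) (X : Finset (Fin s × Fin t)) :
    IsMaxIndep (crossGraph G Gt c ct) (setG c ct M X) := by
  refine isMaxIndep_iff.2 ⟨fun z hz w hw hzw => ?_, fun z hz => ?_⟩
  · simp only [mem_setG] at hz hw
    cases z <;> cases w <;> simp_all [edgeRel, memSetG]
    case ofG.ofG => exact hM.1 _ hz _ hw hzw
    case ofGt.ofGt => exact (hct _ _ hzw).1 hz.1 hw
  · simp only [mem_setG] at hz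
    cases z with
    | ofG a =>
      obtain ⟨a', ha', haa'⟩ := hM.exists_adj_mem hz
      exact ⟨ofG a', by simpa [memSetG], by simpa [edgeRel]⟩
    | ofGt b =>
      by_cases hb : ct b
      · obtain ⟨a, ha, hca⟩ : ∃ a ∈ M, ¬ c a := by simpa [memSetG, hb] using hz
        exact ⟨ofG a, by simpa [memSetG], by simp [edgeRel, hb, hca]⟩
      · exact ⟨u ⊤, by simp [memSetG], by simp [edgeRel, hb]⟩
    | x i j => exact ⟨y i j, by simpa [memSetG] using hz, by simp [edgeRel]⟩
    | y i j => exact ⟨x i j, by simpa [memSetG] using hz, by simp [edgeRel]⟩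
    | u i => exact absurd trivial hz
    | v i => exact ⟨u i, by simp [memSetG], by simp [edgeRel]⟩

theorem isMaxIndep_setGt [Fintype α] [Fintype β] (hc : IsTwoColoring G c) {N : Finset β}
    (hN : IsMaxIndep Gt N) (k : Fin s) {X : Finset (Fin s × Fin t)}
    (hX : X ⊆ Finset.Iio k ×ˢ Finset.univ) :
    IsMaxIndep (crossGraph G Gt c ct) (setGt c ct N k X) := by
  replace hX : ∀ i j, (i, j) ∈ X → i < k := fun i j h => by simpa using hX h
  refine isMaxIndep_iff.2 ⟨fun z hz w hw hzw => ?_, fun z hz => ?_⟩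
  · simp only [mem_setGt] at hz hw
    cases z <;> cases w <;> simp_all [edgeRel, memSetGt]
    case ofG.ofG => exact hz.1 ((hc _ _ hzw).2 hw)
    case ofGt.ofGt => exact hN.1 _ hz _ hw hzw
    all_goals try first | have := hX _ _ hz | have := hX _ _ hw
    all_goals order
  · simp only [mem_setGt] at hz
    cases z with
    | ofG a =>
      by_cases ha : c a
      · exact ⟨v k, by simp [memSetGt], by simp [edgeRel, ha]⟩
      · obtain ⟨b, hb, hcb⟩ : ∃ b ∈ N, ct b := by simpa [memSetGt, ha] using hz
        exact ⟨ofGt b, by simpa [memSetGt], by simp [edgeRel, ha, hcb]⟩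
    | ofGt b =>
      obtain ⟨b', hb', hbb'⟩ := hN.exists_adj_mem hz
      exact ⟨ofGt b', by simpa [memSetGt], by simpa [edgeRel]⟩
    | x i j => exact ⟨y i j, by simpa [memSetGt] using hz, by simp [edgeRel]⟩
    | y i j => exact ⟨x i j, by simpa [memSetGt] using hz, by simp [edgeRel]⟩
    | u i => exact ⟨v k, by simp [memSetGt], by simpa [edgeRel, memSetGt] using hz⟩
    | v i => exact ⟨u i, by simpa [memSetGt] using hz, by simp [edgeRel]⟩

section Structure

variable {S : Finset (Vert α β s t)} (hS : IsMaxIndep (crossGraph G Gt c ct) S)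
include hS

theorem y_mem_iff (i : Fin s) (j : Fin t) : y i j ∈ S ↔ x i j ∉ S := by
  refine ⟨fun hy hx => hS.notMem_of_adj hx (by simp [edgeRel]) hy,
    fun hx => hS.mem_of_forall_adj fun w hw => ?_⟩
  cases w <;> simp [edgeRel] at hw
  obtain ⟨rfl, rfl⟩ := hw
  exact hx

theorem v_mem_of_le {i i' : Fin s} (hi : v i ∈ S) (h : i ≤ i') : v i' ∈ S :=
  hS.mem_of_adj_imp hi fun w hw => by cases w <;> simp_all [edgeRel] <;> order

theorem v_mem_cases : (∀ i, v i ∉ S) ∨ ∃ k, ∀ i, v i ∈ S ↔ k ≤ i := by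
  by_cases h : ∃ i, v i ∈ S
  · obtain ⟨i, hi⟩ := h
    obtain ⟨k, hk, hmin⟩ := wellFounded_lt.has_min {i | v i ∈ S} ⟨i, hi⟩
    exact .inr ⟨k, fun i => ⟨fun hi => not_lt.1 (hmin i hi), v_mem_of_le hS hk⟩⟩
  · exact .inl (not_exists.1 h)

section NoV

variable (hv : ∀ i, v i ∉ S)
include hv

theorem ofGt_notMem_of_v_notMem {b : β} (hb : ¬ ct b) : ofGt b ∉ S := fun hbS =>
  hv ⊤ (hS.mem_of_adj_imp hbS fun w hw => by cases w <;> simp_all [edgeRel])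

theorem u_mem_of_v_notMem (i : Fin s) : u i ∈ S := hS.mem_of_forall_adj fun w hw => by
  cases w <;> simp [edgeRel] at hw
  case ofGt b => exact ofGt_notMem_of_v_notMem hS hv hw.2
  case v i' => exact hv i'

theorem ofG_mem_of_v_notMem (hc : IsTwoColoring G c) {a : α} {b : β} (hb : ct b)
    (hbS : ofGt b ∈ S) (ha : c a) : ofG a ∈ S := hS.mem_of_forall_adj fun w hw => by
  cases w <;> simp [edgeRel] at hw
  case ofG a' => exact hS.notMem_of_adj hbS (by simp [edgeRel, hb, (hc a a' hw).1 ha])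
  case ofGt b' => exact ofGt_notMem_of_v_notMem hS hv (by tauto)
  case v i => exact hv i

theorem isMaxIndep_gPart_of_v_notMem (hc : IsTwoColoring G c) (hG : NoIsolated G) :
    IsMaxIndep G (gPart S) := by
  refine isMaxIndep_iff.2 ⟨fun a ha a' ha' h => hS.1 _ (mem_gPart.1 ha) _ (mem_gPart.1 ha')
    (by simpa [edgeRel]), fun a ha => ?_⟩
  obtain ⟨w, hwS, hw⟩ := hS.exists_adj_mem (mem_gPart.not.1 ha)
  cases w <;> simp [edgeRel] at hw
  case ofG a' => exact ⟨a', mem_gPart.2 hwS, hw⟩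
  case ofGt b =>
    have hb : ct b := by_contra fun hb => ofGt_notMem_of_v_notMem hS hv hb hwS
    obtain ⟨a', haa'⟩ := hG a
    have hca' : c a' := (hc a' a haa'.symm).2 fun ha => hw (iff_of_true ha hb)
    exact ⟨a', mem_gPart.2 (ofG_mem_of_v_notMem hS hv hc hb hwS hca'), haa'⟩
  case v i => exact absurd hwS (hv i)

theorem eq_setG [Fintype α] [Fintype β] (hct : IsTwoColoring Gt ct) :
    S = setG c ct (gPart S) (xPart S) := by
  ext z
  cases z with
  | ofG a => simp [memSetG]
  | ofGt b =>
    simp only [mem_setG, memSetG, mem_gPart]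
    refine ⟨fun hbS => ?_, fun ⟨hb, hM⟩ => hS.mem_of_forall_adj fun w hw => ?_⟩
    · have hb : ct b := by_contra fun hb => ofGt_notMem_of_v_notMem hS hv hb hbS
      exact ⟨hb, fun a haS => by_contra fun ha =>
        hS.notMem_of_adj hbS (by simp [edgeRel, ha, hb]) haS⟩
    · cases w <;> simp [edgeRel] at hw
      case ofG a => exact fun haS => by have := hM a haS; tauto
      case ofGt b' => exact ofGt_notMem_of_v_notMem hS hv ((hct b b' hw).1 hb)
      all_goals exact absurd hb hw.2
  | x i j => simp [memSetG]
  | y i j => simp [memSetG, y_mem_iff hS]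
  | u i => simpa [memSetG] using u_mem_of_v_notMem hS hv i
  | v i => simpa [memSetG] using hv i

end NoV

section VFrom

variable {k : Fin s} (hk : ∀ i, v i ∈ S ↔ k ≤ i)
include hk

theorem ofG_notMem_of_v_mem_iff {a : α} (ha : c a) : ofG a ∉ S :=
  hS.notMem_of_adj ((hk k).2 le_rfl) (by simp [edgeRel, ha])

theorem x_notMem_of_v_mem_iff {i : Fin s} (hi : k ≤ i) (j : Fin t) : x i j ∉ S :=
  hS.notMem_of_adj ((hk k).2 le_rfl) (by simp [edgeRel, hi])

theorem u_mem_iff_of_v_mem_iff (i : Fin s) : u i ∈ S ↔ i < k := by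
  refine ⟨fun hi => not_le.1 fun hki => hS.notMem_of_adj ((hk k).2 le_rfl) ?_ hi,
    fun hi => hS.mem_of_forall_adj fun w hw => ?_⟩
  · simp [edgeRel, hki]
  · cases w <;> simp [edgeRel] at hw
    case ofGt b => exact absurd (hw.1 ▸ hi) not_top_lt
    case v i' => exact (hk i').not.2 (not_le.2 (hw.trans_lt hi))

theorem ofGt_mem_of_v_mem_iff (hct : IsTwoColoring Gt ct) {a : α} {b : β} (ha : ¬ c a)
    (haS : ofG a ∈ S) (hb : ¬ ct b) : ofGt b ∈ S := hS.mem_of_forall_adj fun w hw => by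
  cases w <;> simp [edgeRel] at hw
  case ofG a' => exact ofG_notMem_of_v_mem_iff hS hk (by tauto)
  case ofGt b' => exact hS.notMem_of_adj haS (by simp [edgeRel, ha, (hct b' b hw.symm).2 hb])
  case x i j => exact x_notMem_of_v_mem_iff hS hk (hw.1 ▸ le_top) j
  case u i => exact (u_mem_iff_of_v_mem_iff hS hk i).not.2 (hw.1 ▸ not_top_lt)

theorem isMaxIndep_gtPart_of_v_mem_iff (hct : IsTwoColoring Gt ct) (hGt : NoIsolated Gt) :
    IsMaxIndep Gt (gtPart S) := by
  refine isMaxIndep_iff.2 ⟨fun b hb b' hb' h => hS.1 _ (mem_gtPart.1 hb) _ (mem_gtPart.1 hb')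
    (by simpa [edgeRel]), fun b hb => ?_⟩
  obtain ⟨w, hwS, hw⟩ := hS.exists_adj_mem (mem_gtPart.not.1 hb)
  cases w <;> simp [edgeRel] at hw
  case ofG a =>
    have ha : ¬ c a := fun ha => ofG_notMem_of_v_mem_iff hS hk ha hwS
    obtain ⟨b', hbb'⟩ := hGt b
    exact ⟨b', mem_gtPart.2 (ofGt_mem_of_v_mem_iff hS hk hct ha hwS
      (by have := hct b b' hbb'; tauto)), hbb'⟩
  case ofGt b' => exact ⟨b', mem_gtPart.2 hwS, hw⟩
  case x i j => exact absurd hwS (x_notMem_of_v_mem_iff hS hk (hw.1 ▸ le_top) j)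
  case u i => exact absurd hwS ((u_mem_iff_of_v_mem_iff hS hk i).not.2 (hw.1 ▸ not_top_lt))

theorem xPart_subset_of_v_mem_iff : xPart S ⊆ Finset.Iio k ×ˢ Finset.univ :=
  fun ⟨_, j⟩ hp => by
    simpa using not_le.1 fun hi => x_notMem_of_v_mem_iff hS hk hi j (mem_xPart.1 hp)

theorem eq_setGt [Fintype α] [Fintype β] (hc : IsTwoColoring G c) :
    S = setGt c ct (gtPart S) k (xPart S) := by
  ext z
  cases z with
  | ofG a =>
    simp only [mem_setGt, memSetGt, mem_gtPart]
    refine ⟨fun haS => ?_, fun ⟨ha, hN⟩ => hS.mem_of_forall_adj fun w hw => ?_⟩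
    · have ha : ¬ c a := fun ha => ofG_notMem_of_v_mem_iff hS hk ha haS
      exact ⟨ha, fun b hbS hb => hS.notMem_of_adj haS (by simp [edgeRel, ha, hb]) hbS⟩
    · cases w <;> simp [edgeRel] at hw
      case ofG a' => exact ofG_notMem_of_v_mem_iff hS hk ((hc a' a hw.symm).2 ha)
      case ofGt b => exact fun hbS => by have := hN b hbS; tauto
      case v i => exact absurd hw ha
  | ofGt b => simp [memSetGt]
  | x i j => simp [memSetGt]
  | y i j => simp [memSetGt, y_mem_iff hS]
  | u i => simpa [memSetGt] using u_mem_iff_of_v_mem_iff hS hk i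
  | v i => simpa [memSetGt] using hk i

end VFrom

end Structure

theorem isBipartite_crossGraph [Fintype α] [Fintype β] (hc : IsTwoColoring G c)
    (hct : IsTwoColoring Gt ct) :
    IsBipartite (crossGraph G Gt c ct : SimpleGraph (Vert α β s t)) := by
  let side : Vert α β s t → Prop
    | ofG a => c a
    | ofGt b => ct b
    | x _ _ | u _ => True
    | y _ _ | v _ => False
  refine isBipartite_iff.2 ⟨side, fun z w h => ?_⟩
  cases z <;> cases w <;> simp [edgeRel, side] at h ⊢
  all_goals first | tauto | exact hc _ _ h | exact hct _ _ h

theorem noIsolated_crossGraph (hG : NoIsolated G) (hGt : NoIsolated Gt) :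
    NoIsolated (crossGraph G Gt c ct : SimpleGraph (Vert α β s t)) := by
  intro z
  cases z with
  | ofG a => obtain ⟨a', h⟩ := hG a; exact ⟨ofG a', by simpa [edgeRel]⟩
  | ofGt b => obtain ⟨b', h⟩ := hGt b; exact ⟨ofGt b', by simpa [edgeRel]⟩
  | x i j => exact ⟨y i j, by simp [edgeRel]⟩
  | y i j => exact ⟨x i j, by simp [edgeRel]⟩
  | u i => exact ⟨v i, by simp [edgeRel]⟩
  | v i => exact ⟨u i, by simp [edgeRel]⟩

section Count

variable [Fintype α] [Fintype β]

noncomputable def misG (hct : IsTwoColoring Gt ct)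
    (d : {M : Finset α // IsMaxIndep G M} × Finset (Fin s × Fin t)) :
    {S : Finset (Vert α β s t) // IsMaxIndep (crossGraph G Gt c ct) S} :=
  ⟨setG c ct d.1 d.2, isMaxIndep_setG hct d.1.2 d.2⟩

noncomputable def misGt (hc : IsTwoColoring G c)
    (d : {N : Finset β // IsMaxIndep Gt N} ×
      Σ k : Fin s, (Finset.Iio k ×ˢ Finset.univ : Finset (Fin s × Fin t)).powerset) :
    {S : Finset (Vert α β s t) // IsMaxIndep (crossGraph G Gt c ct) S} :=
  ⟨setGt c ct d.1 d.2.1 d.2.2, isMaxIndep_setGt hc d.1.2 d.2.1 (Finset.mem_powerset.1 d.2.2.2)⟩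

theorem misG_injective (hct : IsTwoColoring Gt ct) :
    Function.Injective (misG (G := G) (c := c) (s := s) (t := t) hct) := by
  rintro ⟨M, X⟩ ⟨M', X'⟩ h
  have hM := congrArg (fun S => gPart S.1) h
  have hX := congrArg (fun S => xPart S.1) h
  simp only [misG, gPart_setG, xPart_setG] at hM hX
  exact Prod.ext (Subtype.ext hM) hX

theorem misGt_injective (hc : IsTwoColoring G c) :
    Function.Injective (misGt (Gt := Gt) (ct := ct) (s := s) (t := t) hc) := by
  rintro ⟨N, k, X⟩ ⟨N', k', X'⟩ h
  have hk (i : Fin s) : k ≤ i ↔ k' ≤ i := by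
    simpa [misGt, memSetGt] using congrArg (fun S => v i ∈ S.1) h
  obtain rfl := le_antisymm ((hk k').2 le_rfl) ((hk k).1 le_rfl)
  have hN := congrArg (fun S => gtPart S.1) h
  have hX := congrArg (fun S => xPart S.1) h
  simp only [misGt, gtPart_setGt, xPart_setGt] at hN hX
  obtain rfl := Subtype.ext hN
  obtain rfl := Subtype.ext hX
  rfl

theorem misG_ne_misGt (hc : IsTwoColoring G c) (hct : IsTwoColoring Gt ct) (d d') :
    misG (s := s) (t := t) hct d ≠ misGt hc d' := fun h => by
  simpa [misG, misGt, memSetG, memSetGt] using congrArg (fun S => v ⊤ ∈ S.1) h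

theorem bijective_sumElim_misG_misGt (hc : IsTwoColoring G c) (hct : IsTwoColoring Gt ct)
    (hG : NoIsolated G) (hGt : NoIsolated Gt) :
    Function.Bijective (Sum.elim (misG (s := s) (t := t) hct) (misGt hc)) := by
  refine ⟨(misG_injective hct).sumElim (misGt_injective hc) (misG_ne_misGt hc hct),
    fun ⟨S, hS⟩ => ?_⟩
  rcases v_mem_cases hS with hv | ⟨k, hk⟩
  · exact ⟨.inl (⟨gPart S, isMaxIndep_gPart_of_v_notMem hS hv hc hG⟩, xPart S),
      Subtype.ext (eq_setG hS hv hct).symm⟩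
  · exact ⟨.inr (⟨gtPart S, isMaxIndep_gtPart_of_v_mem_iff hS hk hct hGt⟩,
      ⟨k, xPart S, Finset.mem_powerset.2 (xPart_subset_of_v_mem_iff hS hk)⟩),
      Subtype.ext (eq_setGt hS hk hc).symm⟩

theorem iotaM_crossGraph (hc : IsTwoColoring G c) (hct : IsTwoColoring Gt ct)
    (hG : NoIsolated G) (hGt : NoIsolated Gt) :
    iotaM (crossGraph G Gt c ct : SimpleGraph (Vert α β s t)) =
      2 ^ (s * t) * iotaM G + (∑ k : Fin s, 2 ^ (k * t : ℕ)) * iotaM Gt := by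
  rw [iotaM, ← Nat.card_congr <|
      Equiv.ofBijective _ (bijective_sumElim_misG_misGt hc hct hG hGt),
    Nat.card_sum, Nat.card_prod, Nat.card_prod, ← iotaM, ← iotaM]
  simp only [Nat.card_eq_fintype_card, Fintype.card_finset, Fintype.card_prod, Fintype.card_fin,
    Fintype.card_sigma, Fintype.card_coe, Finset.card_powerset, Finset.card_product, Fin.card_Iio,
    Finset.card_univ]
  ring

end Count

end CrossJoin

theorem Fin.sum_two_pow_mul_eq_div {t : ℕ} (ht : 1 ≤ t) (s : ℕ) :
    ∑ k : Fin s, 2 ^ (k * t : ℕ) = (2 ^ (s * t) - 1) / (2 ^ t - 1) := by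
  simp_rw [Fin.sum_univ_eq_sum_range (fun k => 2 ^ (k * t)), mul_comm _ t, pow_mul]
  exact Nat.geomSum_eq (Nat.one_lt_two_pow (by omega)) s

open CrossJoin in
/-- For bipartite `G`, `G̃` without isolated vertices and `s, t ≥ 1`, there is a
bipartite graph without isolated vertices having exactly
`2^{st}·ι_m(G) + ((2^{st} − 1)/(2^t − 1))·ι_m(G̃)` maximal independent sets
and at most `ν(G) + ν(G̃) + 2s(t+1) + 3` vertices. -/
theorem stmt_15 {α β : Type*} [Fintype α] [Fintype β]
    (G : SimpleGraph α) (Gt : SimpleGraph β)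
    (hbipG : IsBipartite G) (hisoG : NoIsolated G)
    (hbipGt : IsBipartite Gt) (hisoGt : NoIsolated Gt)
    (s t : ℕ) (hs : 1 ≤ s) (ht : 1 ≤ t) :
    ∃ (W : Type) (_ : Fintype W) (G' : SimpleGraph W),
      IsBipartite G' ∧ NoIsolated G' ∧
      iotaM G' = 2 ^ (s * t) * iotaM G + ((2 ^ (s * t) - 1) / (2 ^ t - 1)) * iotaM Gt ∧
      Fintype.card W ≤ Fintype.card α + Fintype.card β + 2 * s * (t + 1) + 3 := by
  obtain ⟨c, hc⟩ := isBipartite_iff.1 hbipG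
  obtain ⟨ct, hct⟩ := isBipartite_iff.1 hbipGt
  have : NeZero s := ⟨by omega⟩
  let H : SimpleGraph (Vert α β s t) := crossGraph G Gt c ct
  let e := H.overFinIso rfl
  refine ⟨_, inferInstance, _, (isBipartite_crossGraph hc hct).of_iso e,
    (noIsolated_crossGraph hisoG hisoGt).of_iso e, ?_, ?_⟩
  · rw [← iotaM_congr e, iotaM_crossGraph hc hct hisoG hisoGt, Fin.sum_two_pow_mul_eq_div ht]
  · simp [card_vert]
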